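/- Let 1<p<∞ and let Λ={λ_k}_{k∈ℤ} be a sequence of distinct nonzero complex numbers satisfying conditions (i), (ii), (iii') of the characterization theorem: (i) the Carleson condition in each half-plane together with inf_{k≠j}|λ_k−λ_j|>0; (ii) the generating function S(z)=lim_{R→∞}∏_{|λ_k|<R}(1−z/λ_k) exists and is entire of exponential type π; (iii') F(x)^p satisfies the (A_p) condition, where F(x)=|S(x)|/dist(x,Λ). Then ∫_ℝ |S(x)|^p dx = ∞. -/

import Mathlib

open MeasureTheory Filter Metric

noncomputable section

/-- `f` is an entire-type bound: exponential type at most `τ`. -/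
def ExpTypeLe (τ : ℝ) (f : ℂ → ℂ) : Prop :=
  ∀ ε > (0 : ℝ), ∃ C : ℝ, ∀ z : ℂ, ‖f z‖ ≤ C * Real.exp ((τ + ε) * ‖z‖)

/-- `f` has exponential type exactly `τ`. -/
def ExpTypeEq (τ : ℝ) (f : ℂ → ℂ) : Prop :=
  ExpTypeLe τ f ∧ ∀ σ : ℝ, ExpTypeLe σ f → τ ≤ σ

/-- Membership in the Paley–Wiener space `L^p_π`: entire, of exponential type at most `π`,
with restriction to `ℝ` in `L^p`. -/
def MemPW (p : ℝ) (f : ℂ → ℂ) : Prop :=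
  Differentiable ℂ f ∧ ExpTypeLe Real.pi f ∧
    MeasureTheory.MemLp (fun x : ℝ => f x) (ENNReal.ofReal p)

/-- The weight `e^{-pπ|Im λ|}(1+|Im λ|)` appearing in the data condition. -/
def PWWeight (p : ℝ) (lam : ℂ) : ℝ :=
  Real.exp (-(p * Real.pi * |lam.im|)) * (1 + |lam.im|)

/-- `Λ` is a complete interpolating sequence for `L^p_π`. -/
def IsCIS (p : ℝ) (Λ : ℤ → ℂ) : Prop :=
  ∀ a : ℤ → ℂ,
    Summable (fun k => ‖a k‖ ^ p * PWWeight p (Λ k)) →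
    ∃! f : ℂ → ℂ, MemPW p f ∧ ∀ k : ℤ, f (Λ k) = a k

/-- Carleson condition for `Λ ∩ {Im z > a}` in the half-plane `{Im z > a}`,
expressed via uniform lower bounds on finite subproducts. -/
def CarlesonAbove (a : ℝ) (Λ : ℤ → ℂ) : Prop :=
  ∃ c > (0 : ℝ), ∀ j : ℤ, a < (Λ j).im → ∀ F : Finset ℤ,
    (∀ k ∈ F, a < (Λ k).im ∧ k ≠ j) →
    c ≤ ∏ k ∈ F,
      ‖(Λ j - Λ k) / (Λ j - (starRingEnd ℂ) (Λ k) - 2 * (a : ℂ) * Complex.I)‖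

/-- Carleson condition for `Λ ∩ {Im z < a}` in the half-plane `{Im z < a}`. -/
def CarlesonBelow (a : ℝ) (Λ : ℤ → ℂ) : Prop :=
  ∃ c > (0 : ℝ), ∀ j : ℤ, (Λ j).im < a → ∀ F : Finset ℤ,
    (∀ k ∈ F, (Λ k).im < a ∧ k ≠ j) →
    c ≤ ∏ k ∈ F,
      ‖(Λ j - Λ k) / (Λ j - (starRingEnd ℂ) (Λ k) - 2 * (a : ℂ) * Complex.I)‖

/-- Uniform separation: `inf_{k ≠ j} |λ_k - λ_j| > 0`. -/
def Separated (Λ : ℤ → ℂ) : Prop :=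
  ∃ δ > (0 : ℝ), ∀ j k : ℤ, j ≠ k → δ ≤ ‖Λ j - Λ k‖

/-- `S` is the generating function of `Λ`:
`S(z) = lim_{R→∞} ∏_{|λ_k| < R} (1 - z/λ_k)` (the index sets being finite). -/
def HasGenFun (Λ : ℤ → ℂ) (S : ℂ → ℂ) : Prop :=
  (∀ R : ℝ, {k : ℤ | ‖Λ k‖ < R}.Finite) ∧
  ∀ z : ℂ, Tendsto (fun R : ℝ => ∏ᶠ k ∈ {k : ℤ | ‖Λ k‖ < R}, (1 - z / Λ k))
    atTop (nhds (S z))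

/-- `dist(x, Λ)` for real `x`. -/
def distToSeq (Λ : ℤ → ℂ) (x : ℝ) : ℝ := Metric.infDist (x : ℂ) (Set.range Λ)

/-- `F(x) = |S(x)| / dist(x, Λ)`. -/
def Ffun (Λ : ℤ → ℂ) (S : ℂ → ℂ) (x : ℝ) : ℝ := ‖S x‖ / distToSeq Λ x

/-- The Muckenhoupt `(A_p)` condition for a weight `v` on `ℝ`. -/
def MuckAp (p : ℝ) (v : ℝ → ℝ) : Prop :=
  (∀ a b : ℝ, a < b → IntervalIntegrable v MeasureTheory.volume a b ∧
      IntervalIntegrable (fun x => v x ^ (-(p - 1)⁻¹)) MeasureTheory.volume a b) ∧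
  ∃ C : ℝ, ∀ a b : ℝ, a < b →
    ((b - a)⁻¹ * ∫ x in a..b, v x) *
      ((b - a)⁻¹ * ∫ x in a..b, v x ^ (-(p - 1)⁻¹)) ^ (p - 1) ≤ C

/-- The discrete Muckenhoupt `(A_p)` condition for a sequence `w`. -/
def DiscreteAp (p : ℝ) (w : ℤ → ℝ) : Prop :=
  ∃ C : ℝ, ∀ k : ℤ, ∀ n : ℕ, 0 < n →
    ((n : ℝ)⁻¹ * ∑ j ∈ Finset.Icc (k + 1) (k + (n : ℤ)), w j) *
      ((n : ℝ)⁻¹ * ∑ j ∈ Finset.Icc (k + 1) (k + (n : ℤ)), w j ^ (-(p - 1)⁻¹)) ^ (p - 1) ≤ C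

/-- `z` lies in the closed square `Q(x, r)` with center `x ∈ ℝ`, side `2r`,
sides parallel to the axes. -/
def InSquare (z : ℂ) (x r : ℝ) : Prop := |z.re - x| ≤ r ∧ |z.im| ≤ r

/-- A set of complex numbers is relatively dense. -/
def RelDense (A : Set ℂ) : Prop := ∃ r₀ > (0 : ℝ), ∀ x : ℝ, ∃ z ∈ A, InSquare z x r₀

open Set
open scoped ENNReal

/-!
Write `v = F ^ p`. For `E ⊆ I`, Hölder's inequality applied to `1 = v ^ (1/p) v ^ (-1/p)` on `E`,
combined with the `(A_p)` bound on `I`, gives `v(I) |E| ^ p ≤ C |I| ^ p v(E)`. With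
`E = (L, 3L] ⊆ (-3L, 3L]` this makes `v(-L, L]` grow geometrically along `L = 3 ^ n`, so it is
unbounded. On the other hand, by separation at least half of `(-L, L]` lies at distance `≥ δ / 8`
from `Λ`, where `F ≤ 8 |S| / δ`; taking `E` to be that half bounds `v(-L, L]` by a multiple of
`∫ |S| ^ p`, uniformly in `L`.
-/

theorem measureReal_rpow_le_setIntegral_mul_rpow {α : Type*} [MeasurableSpace α]
    {μ : Measure α} {p : ℝ} (hp : 1 < p) {v : α → ℝ} (hv : ∀ᵐ x ∂μ, 0 < v x) {s E : Set α}
    (hEs : E ⊆ s) (hvi : IntegrableOn v s μ)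
    (hσi : IntegrableOn (fun x => v x ^ (-(p - 1)⁻¹)) s μ) :
    μ.real E ^ p ≤ (∫ x in E, v x ∂μ) * (∫ x in s, v x ^ (-(p - 1)⁻¹) ∂μ) ^ (p - 1) := by
  have hp0 : 0 < p := by linarith
  have hp1 : p - 1 ≠ 0 := by linarith
  set V : α → ℝ≥0∞ := fun x => ENNReal.ofReal (v x)
  set A := ∫ x in E, v x ∂μ
  set B := ∫ x in s, v x ^ (-(p - 1)⁻¹) ∂μ
  have hvE : IntegrableOn v E μ := hvi.mono_set hEs
  have hVm : AEMeasurable V (μ.restrict E) := hvE.aemeasurable.ennreal_ofReal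
  have hv_nonneg : ∀ᵐ x ∂μ, 0 ≤ v x := hv.mono fun _ hx => hx.le
  have hσ_nonneg : ∀ᵐ x ∂μ, 0 ≤ v x ^ (-(p - 1)⁻¹) :=
    hv_nonneg.mono fun _ hx => Real.rpow_nonneg hx _
  have hA : ∫⁻ x in E, V x ∂μ = ENNReal.ofReal A :=
    (ofReal_integral_eq_lintegral_ofReal hvE (ae_restrict_of_ae hv_nonneg)).symm
  have hB : ∫⁻ x in E, V x ^ (-(p - 1)⁻¹) ∂μ ≤ ENNReal.ofReal B := by
    rw [ofReal_integral_eq_lintegral_ofReal hσi (ae_restrict_of_ae hσ_nonneg)]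
    refine (lintegral_mono_set hEs).trans_eq (lintegral_congr_ae (ae_restrict_of_ae ?_))
    filter_upwards [hv] with x hx
    exact ENNReal.ofReal_rpow_of_pos hx
  have holder : μ E ≤ ENNReal.ofReal A ^ (1 / p) * ENNReal.ofReal B ^ ((p - 1) / p) := by
    have hpq : p.HolderConjugate (p / (p - 1)) := .conjExponent hp
    have h := ENNReal.lintegral_mul_le_Lp_mul_Lq (μ.restrict E) hpq
      (hVm.pow_const (1 / p)) (hVm.pow_const (-(1 / p)))
    have hone : ∀ᵐ x ∂μ.restrict E,
        ((fun x => V x ^ (1 / p)) * fun x => V x ^ (-(1 / p))) x = 1 := by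
      filter_upwards [ae_restrict_of_ae hv] with x hx
      rw [Pi.mul_apply, ← ENNReal.rpow_add _ _ (ENNReal.ofReal_pos.2 hx).ne' ENNReal.ofReal_ne_top,
        add_neg_cancel, ENNReal.rpow_zero]
    have e₁ : 1 / p * p = 1 := by field_simp
    have e₂ : -(1 / p) * (p / (p - 1)) = -(p - 1)⁻¹ := by field_simp
    have e₃ : 1 / (p / (p - 1)) = (p - 1) / p := by field_simp
    rw [lintegral_congr_ae hone, setLIntegral_one] at h
    simp_rw [← ENNReal.rpow_mul, e₁, e₂, e₃, ENNReal.rpow_one, hA] at h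
    exact h.trans (by gcongr)
  have hA0 : 0 ≤ A := integral_nonneg_of_ae (ae_restrict_of_ae hv_nonneg)
  have hB0 : 0 ≤ B := integral_nonneg_of_ae (ae_restrict_of_ae hσ_nonneg)
  have hpow : μ E ^ p ≤ ENNReal.ofReal (A * B ^ (p - 1)) := calc
    μ E ^ p ≤ (ENNReal.ofReal A ^ (1 / p) * ENNReal.ofReal B ^ ((p - 1) / p)) ^ p := by gcongr
    _ = ENNReal.ofReal A * ENNReal.ofReal B ^ (p - 1) := by
      rw [ENNReal.mul_rpow_of_nonneg _ _ hp0.le, ← ENNReal.rpow_mul, ← ENNReal.rpow_mul]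
      field_simp
      rw [ENNReal.rpow_one]
    _ = ENNReal.ofReal (A * B ^ (p - 1)) := by
      rw [ENNReal.ofReal_mul hA0, ENNReal.ofReal_rpow_of_nonneg hB0 (by linarith)]
  rw [measureReal_def, ENNReal.toReal_rpow]
  exact ENNReal.toReal_le_of_le_ofReal (by positivity) hpow

namespace MuckAp

variable {p : ℝ} {v : ℝ → ℝ}

theorem integrableOn_Ioc (h : MuckAp p v) (a b : ℝ) : IntegrableOn v (Ioc a b) := by
  rcases lt_or_ge a b with hab | hba
  · exact (intervalIntegrable_iff_integrableOn_Ioc_of_le hab.le).mp (h.1 a b hab).1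
  · simp [Ioc_eq_empty_of_le hba]

theorem integrableOn_rpow_Ioc (h : MuckAp p v) (a b : ℝ) :
    IntegrableOn (fun x => v x ^ (-(p - 1)⁻¹)) (Ioc a b) := by
  rcases lt_or_ge a b with hab | hba
  · exact (intervalIntegrable_iff_integrableOn_Ioc_of_le hab.le).mp (h.1 a b hab).2
  · simp [Ioc_eq_empty_of_le hba]

theorem exists_pos_setIntegral_mul_measureReal_rpow_le (hp : 1 < p) (hv : ∀ᵐ x, 0 < v x)
    (h : MuckAp p v) : ∃ C > 0, ∀ a b : ℝ, a < b → ∀ E ⊆ Ioc a b,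
      (∫ x in Ioc a b, v x) * volume.real E ^ p ≤ C * (b - a) ^ p * ∫ x in E, v x := by
  obtain ⟨C, hC⟩ := h.2
  refine ⟨max C 1, by positivity, fun a b hab E hE => ?_⟩
  have hba : 0 < b - a := by linarith
  have hv_nonneg : ∀ᵐ x, 0 ≤ v x := hv.mono fun _ hx => hx.le
  set A := ∫ x in Ioc a b, v x
  set B := ∫ x in Ioc a b, v x ^ (-(p - 1)⁻¹)
  have hA : 0 ≤ A := integral_nonneg_of_ae (ae_restrict_of_ae hv_nonneg)
  have hB : 0 ≤ B := integral_nonneg_of_ae (ae_restrict_of_ae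
    (hv_nonneg.mono fun _ hx => Real.rpow_nonneg hx _))
  have hE_nonneg : 0 ≤ ∫ x in E, v x := integral_nonneg_of_ae (ae_restrict_of_ae hv_nonneg)
  have hAB : A * B ^ (p - 1) ≤ C * (b - a) ^ p := by
    have hCab := hC a b hab
    rw [intervalIntegral.integral_of_le hab.le, intervalIntegral.integral_of_le hab.le,
      Real.mul_rpow (by positivity) hB, Real.inv_rpow hba.le, Real.rpow_sub_one hba.ne'] at hCab
    have hbap : 0 < (b - a) ^ p := by positivity
    field_simp at hCab
    linarith
  calc A * volume.real E ^ p
      ≤ A * ((∫ x in E, v x) * B ^ (p - 1)) := by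
        gcongr
        exact measureReal_rpow_le_setIntegral_mul_rpow hp hv hE (h.integrableOn_Ioc a b)
          (h.integrableOn_rpow_Ioc a b)
    _ = (∫ x in E, v x) * (A * B ^ (p - 1)) := by ring
    _ ≤ (∫ x in E, v x) * (max C 1 * (b - a) ^ p) :=
        mul_le_mul_of_nonneg_left (hAB.trans (by gcongr; exact le_max_left _ _)) hE_nonneg
    _ = max C 1 * (b - a) ^ p * ∫ x in E, v x := by ring

theorem exists_pos_one_add_mul_setIntegral_Ioc_le (hp : 1 < p) (hv : ∀ᵐ x, 0 < v x)
    (h : MuckAp p v) :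
    ∃ θ > 0, ∀ L > 0,
      (1 + θ) * ∫ x in Ioc (-L) L, v x ≤ ∫ x in Ioc (-(3 * L)) (3 * L), v x := by
  obtain ⟨C, hC0, hC⟩ := h.exists_pos_setIntegral_mul_measureReal_rpow_le hp hv
  refine ⟨(C * 3 ^ p)⁻¹, by positivity, fun L hL => ?_⟩
  have hv_nonneg : ∀ᵐ x, 0 ≤ v x := hv.mono fun _ hx => hx.le
  set θ := (C * 3 ^ p)⁻¹
  set A₁ := ∫ x in Ioc (-L) L, v x
  set A₃ := ∫ x in Ioc (-(3 * L)) (3 * L), v x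
  set A' := ∫ x in Ioc L (3 * L), v x
  -- `Ioc L (3 L)` has a third of the length of `Ioc (-3 L) (3 L)`, so it carries a fixed
  -- proportion of its mass
  have hA' : θ * A₃ ≤ A' := by
    have key := hC (-(3 * L)) (3 * L) (by linarith) (Ioc L (3 * L))
      (Ioc_subset_Ioc (by linarith) le_rfl)
    rw [Real.volume_real_Ioc_of_le (by linarith),
      show 3 * L - -(3 * L) = 3 * (3 * L - L) by ring,
      Real.mul_rpow (by norm_num) (by linarith)] at key
    have hLp : 0 < (3 * L - L) ^ p := by apply Real.rpow_pos_of_pos; linarith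
    rw [inv_mul_le_iff₀ (by positivity)]
    nlinarith
  have hsplit : A₁ + A' ≤ A₃ := by
    rw [← setIntegral_union (Ioc_disjoint_Ioc_of_le le_rfl) measurableSet_Ioc
      (h.integrableOn_Ioc _ _) (h.integrableOn_Ioc _ _), Ioc_union_Ioc_eq_Ioc (by linarith)
      (by linarith)]
    exact setIntegral_mono_set (h.integrableOn_Ioc _ _) (ae_restrict_of_ae hv_nonneg)
      (Ioc_subset_Ioc (by linarith) le_rfl).eventuallyLE
  have hA₁ : A₁ ≤ A₃ := setIntegral_mono_set (h.integrableOn_Ioc _ _)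
    (ae_restrict_of_ae hv_nonneg) (Ioc_subset_Ioc (by linarith) (by linarith)).eventuallyLE
  have hθ : 0 < θ := by positivity
  nlinarith

theorem tendsto_setIntegral_Ioc_neg_atTop (hp : 1 < p) (hv : ∀ᵐ x, 0 < v x) (h : MuckAp p v) :
    Tendsto (fun L => ∫ x in Ioc (-L) L, v x) atTop atTop := by
  obtain ⟨θ, hθ, hgrow⟩ := h.exists_pos_one_add_mul_setIntegral_Ioc_le hp hv
  set A := fun L => ∫ x in Ioc (-L) L, v x
  have hv_nonneg : ∀ᵐ x, 0 ≤ v x := hv.mono fun _ hx => hx.le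
  have hmono : Monotone A := fun L L' hLL' =>
    setIntegral_mono_set (h.integrableOn_Ioc _ _) (ae_restrict_of_ae hv_nonneg)
      (Ioc_subset_Ioc (neg_le_neg hLL') hLL').eventuallyLE
  have hA₁ : 0 < A 1 := by
    rw [setIntegral_pos_iff_support_of_nonneg_ae (ae_restrict_of_ae hv_nonneg)
      (h.integrableOn_Ioc _ _),
      Measure.measure_inter_eq_of_ae (t := Function.support v) (hv.mono fun _ hx => hx.ne'),
      Real.volume_Ioc]
    norm_num
  have hiter : ∀ n : ℕ, (1 + θ) ^ n * A 1 ≤ A (3 ^ n) := by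
    intro n
    induction n with
    | zero => simp
    | succ n ih => calc
        (1 + θ) ^ (n + 1) * A 1 = (1 + θ) * ((1 + θ) ^ n * A 1) := by ring
        _ ≤ (1 + θ) * A (3 ^ n) := by gcongr
        _ ≤ A (3 ^ (n + 1)) := by rw [pow_succ', ← Nat.cast_ofNat]; exact hgrow _ (by positivity)
  refine tendsto_atTop_atTop_of_monotone hmono fun K => ?_
  obtain ⟨n, hn⟩ := pow_unbounded_of_one_lt (K / A 1) (by linarith : 1 < 1 + θ)
  exact ⟨3 ^ n, by rw [div_lt_iff₀ hA₁] at hn; linarith [hiter n]⟩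

end MuckAp

theorem AnalyticOnNhd.countable_preimage_zero {𝕜 E : Type*} [NontriviallyNormedField 𝕜]
    [SecondCountableTopology 𝕜] [ConnectedSpace 𝕜] [NormedAddCommGroup E] [NormedSpace 𝕜 E]
    {f : 𝕜 → E} (hf : AnalyticOnNhd 𝕜 f univ) {x : 𝕜} (hx : f x ≠ 0) :
    (f ⁻¹' {0}).Countable := by
  have hdisc := isDiscrete_of_codiscreteWithin (s := f ⁻¹' {0}) (U := univ)
    (hf.preimage_zero_mem_codiscreteWithin hx trivial isConnected_univ)
  simpa using (HereditarilyLindelofSpace.isLindelof _).countable_of_isDiscrete hdisc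

theorem Complex.half_le_abs_re_sub_re {z w : ℂ} {δ : ℝ} (h : δ ≤ ‖z - w‖) (hz : |z.im| < δ / 8)
    (hw : |w.im| < δ / 8) : 2 * (δ / 4) ≤ |z.re - w.re| := by
  have h₁ := Complex.norm_le_abs_re_add_abs_im (z - w)
  have h₂ := abs_sub z.im w.im
  rw [Complex.sub_re, Complex.sub_im] at h₁
  linarith [abs_nonneg z.im]

namespace Separated

variable {Λ : ℤ → ℂ}

theorem isClosed_range (h : Separated Λ) : IsClosed (range Λ) := by
  obtain ⟨δ, hδ, hsep⟩ := h
  refine isClosed_of_pairwise_le_dist hδ ?_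
  rintro _ ⟨j, rfl⟩ _ ⟨k, rfl⟩ hjk
  rw [dist_eq_norm]
  exact hsep j k fun hjk' => hjk (hjk' ▸ rfl)

theorem countable_setOf_distToSeq_eq_zero (h : Separated Λ) :
    {x : ℝ | distToSeq Λ x = 0}.Countable := by
  refine ((countable_range Λ).preimage Complex.ofReal_injective).mono fun x hx => ?_
  rw [mem_preimage, ← h.isClosed_range.closure_eq,
    mem_closure_iff_infDist_zero (range_nonempty Λ)]
  exact hx

end Separated

theorem two_mul_volume_iUnion_ball_inter_Ioc_le {ι : Type*} [Countable ι] {c : ι → ℝ} {r : ℝ}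
    (hc : Pairwise fun i j => 2 * r ≤ |c i - c j|) (a b : ℝ) :
    2 * volume ((⋃ i, ball (c i) (r / 2)) ∩ Ioc a b) ≤ ENNReal.ofReal (b - a + 3 * r) := by
  set J := Ioc (a - 3 * r / 2) (b + 3 * r / 2)
  -- a ball of radius `r / 2` meeting `Ioc a b` has its concentric ball of radius `r` inside `J`
  have hball : ∀ i, 2 * volume (ball (c i) (r / 2) ∩ Ioc a b) ≤ volume (ball (c i) r ∩ J) := by
    intro i
    rcases (ball (c i) (r / 2) ∩ Ioc a b).eq_empty_or_nonempty with he | ⟨x, hxc, hxa, hxb⟩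
    · simp [he]
    rw [mem_ball, Real.dist_eq, abs_lt] at hxc
    have hJ : ball (c i) r ⊆ J := fun y hy => by
      rw [mem_ball, Real.dist_eq, abs_lt] at hy
      constructor <;> linarith
    rw [inter_eq_left.mpr hJ, Real.volume_ball]
    calc 2 * volume (ball (c i) (r / 2) ∩ Ioc a b)
        ≤ 2 * volume (ball (c i) (r / 2)) := by gcongr; exact inter_subset_left
      _ = ENNReal.ofReal (2 * r) := by
        rw [Real.volume_ball, ← ENNReal.ofReal_ofNat 2, ← ENNReal.ofReal_mul zero_le_two]
        ring_nf
  have hdisj : Pairwise (Function.onFun Disjoint fun i => ball (c i) r ∩ J) := fun i j hij =>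
    (Metric.ball_disjoint_ball (by rw [Real.dist_eq]; linarith [hc hij])).mono
      inter_subset_left inter_subset_left
  calc 2 * volume ((⋃ i, ball (c i) (r / 2)) ∩ Ioc a b)
      ≤ 2 * ∑' i, volume (ball (c i) (r / 2) ∩ Ioc a b) := by
        rw [iUnion_inter]; gcongr; exact measure_iUnion_le _
    _ = ∑' i, 2 * volume (ball (c i) (r / 2) ∩ Ioc a b) := ENNReal.tsum_mul_left.symm
    _ ≤ ∑' i, volume (ball (c i) r ∩ J) := ENNReal.tsum_le_tsum hball
    _ = volume (⋃ i, ball (c i) r ∩ J) :=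
        (measure_iUnion hdisj fun _ => measurableSet_ball.inter measurableSet_Ioc).symm
    _ ≤ volume J := measure_mono (iUnion_subset fun _ => inter_subset_right)
    _ = ENNReal.ofReal (b - a + 3 * r) := by rw [Real.volume_Ioc]; ring_nf

theorem half_le_measureReal_Ioc_inter_setOf_le_distToSeq {Λ : ℤ → ℂ} {δ : ℝ} (hδ : 0 ≤ δ)
    (hsep : ∀ j k : ℤ, j ≠ k → δ ≤ ‖Λ j - Λ k‖) {L : ℝ} (hL : δ ≤ L) :
    L / 2 ≤ volume.real (Ioc (-L) L ∩ {x | δ / 8 ≤ distToSeq Λ x}) := by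
  set I := Ioc (-L) L
  set ι := {k : ℤ // |(Λ k).im| < δ / 8}
  have hc : Pairwise fun i j : ι => 2 * (δ / 4) ≤ |(Λ i).re - (Λ j).re| := fun i j hij =>
    Complex.half_le_abs_re_sub_re (hsep _ _ (Subtype.coe_ne_coe.mpr hij)) i.2 j.2
  have hnear : {x | distToSeq Λ x < δ / 8} ⊆ ⋃ i : ι, ball (Λ i).re (δ / 4 / 2) := by
    intro x hx
    obtain ⟨_, ⟨k, rfl⟩, hxk⟩ := (infDist_lt_iff (range_nonempty Λ)).mp hx
    rw [Complex.dist_eq] at hxk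
    have him := Complex.abs_im_le_norm ((x : ℂ) - Λ k)
    have hre := Complex.abs_re_le_norm ((x : ℂ) - Λ k)
    simp only [Complex.sub_im, Complex.ofReal_im, zero_sub, abs_neg, Complex.sub_re,
      Complex.ofReal_re] at him hre
    refine mem_iUnion.mpr ⟨⟨k, by linarith⟩, ?_⟩
    rw [mem_ball, Real.dist_eq]
    linarith
  have hbad : 2 * volume.real ({x | distToSeq Λ x < δ / 8} ∩ I) ≤ 2 * L + 3 * (δ / 4) := by
    have h : 2 * volume ({x | distToSeq Λ x < δ / 8} ∩ I) ≤
        ENNReal.ofReal (2 * L + 3 * (δ / 4)) := by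
      refine le_trans ?_ ((two_mul_volume_iUnion_ball_inter_Ioc_le hc (-L) L).trans_eq ?_)
      · gcongr
      · ring_nf
    have h' := ENNReal.toReal_le_of_le_ofReal (by linarith) h
    rwa [ENNReal.toReal_mul, ENNReal.toReal_ofNat] at h'
  have hsplit : I = (I ∩ {x | δ / 8 ≤ distToSeq Λ x}) ∪ ({x | distToSeq Λ x < δ / 8} ∩ I) := by
    ext x
    by_cases hx : δ / 8 ≤ distToSeq Λ x
    · simp [hx]
    · simp [hx, lt_of_not_ge hx]
  have hI : volume.real I = 2 * L := by
    rw [Real.volume_real_Ioc_of_le (by linarith)]; ring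
  have := measureReal_union_le (μ := volume) (I ∩ {x | δ / 8 ≤ distToSeq Λ x})
    ({x | distToSeq Λ x < δ / 8} ∩ I)
  rw [← hsplit, hI] at this
  linarith

theorem HasGenFun.apply_zero {Λ : ℤ → ℂ} {S : ℂ → ℂ} (h : HasGenFun Λ S) : S 0 = 1 :=
  tendsto_nhds_unique (h.2 0) (by simp)

theorem ae_pos_Ffun {Λ : ℤ → ℂ} {S : ℂ → ℂ} (hsep : Separated Λ) (hS : Differentiable ℂ S)
    (hS0 : S 0 ≠ 0) : ∀ᵐ x : ℝ, 0 < Ffun Λ S x := by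
  have hzeros : ((↑) ⁻¹' (S ⁻¹' {0}) : Set ℝ).Countable :=
    (AnalyticOnNhd.countable_preimage_zero (fun z _ => hS.analyticAt z) hS0).preimage
      Complex.ofReal_injective
  filter_upwards [(hzeros.union hsep.countable_setOf_distToSeq_eq_zero).ae_notMem volume]
    with x hx
  simp only [mem_union, mem_preimage, mem_singleton_iff, mem_ofPred_eq, not_or] at hx
  exact div_pos (norm_pos_iff.mpr hx.1) (infDist_nonneg.lt_of_ne' hx.2)

theorem exists_forall_ge_setIntegral_Ioc_rpow_Ffun_le {p : ℝ} (hp : 1 < p) {Λ : ℤ → ℂ}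
    {S : ℂ → ℂ} (hsep : Separated Λ) (hF : ∀ᵐ x : ℝ, 0 < Ffun Λ S x)
    (hAp : MuckAp p (fun x => Ffun Λ S x ^ p))
    (hint : Integrable (fun x : ℝ => ‖S x‖ ^ p)) :
    ∃ K L₀ : ℝ, ∀ L ≥ L₀, ∫ x in Ioc (-L) L, Ffun Λ S x ^ p ≤ K := by
  obtain ⟨δ, hδ, hsepδ⟩ := hsep
  have hv : ∀ᵐ x : ℝ, 0 < Ffun Λ S x ^ p := hF.mono fun x hx => Real.rpow_pos_of_pos hx p
  obtain ⟨C, hC0, hC⟩ := hAp.exists_pos_setIntegral_mul_measureReal_rpow_le hp hv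
  set M := ∫ x : ℝ, ‖S x‖ ^ p
  refine ⟨C * 4 ^ p * (M / (δ / 8) ^ p), δ, fun L hL => ?_⟩
  set A := ∫ x in Ioc (-L) L, Ffun Λ S x ^ p
  set G := Ioc (-L) L ∩ {x | δ / 8 ≤ distToSeq Λ x}
  have hG : L / 2 ≤ volume.real G :=
    half_le_measureReal_Ioc_inter_setOf_le_distToSeq hδ.le hsepδ hL
  have hGmeas : MeasurableSet G := measurableSet_Ioc.inter (measurableSet_le measurable_const
    ((continuous_infDist_pt _).comp Complex.continuous_ofReal).measurable)
  have hGv : ∫ x in G, Ffun Λ S x ^ p ≤ M / (δ / 8) ^ p := calc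
    ∫ x in G, Ffun Λ S x ^ p ≤ ∫ x in G, ‖S x‖ ^ p / (δ / 8) ^ p := by
      refine setIntegral_mono_on ((hAp.integrableOn_Ioc _ _).mono_set inter_subset_left)
        (hint.div_const _).integrableOn hGmeas fun x hx => ?_
      rw [← Real.div_rpow (norm_nonneg _) (by positivity)]
      exact Real.rpow_le_rpow (div_nonneg (norm_nonneg _) infDist_nonneg)
        (div_le_div_of_nonneg_left (norm_nonneg _) (by positivity) hx.2) (by linarith)
    _ = (∫ x in G, ‖S x‖ ^ p) / (δ / 8) ^ p := integral_div _ _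
    _ ≤ M / (δ / 8) ^ p := by
      gcongr
      exact setIntegral_le_integral hint (.of_forall fun x => by positivity)
  have hA : 0 ≤ A := integral_nonneg_of_ae (ae_restrict_of_ae (hv.mono fun _ hx => hx.le))
  have hLp : 0 < (L / 2) ^ p := by apply Real.rpow_pos_of_pos; linarith
  refine le_of_mul_le_mul_right ?_ hLp
  calc A * (L / 2) ^ p ≤ A * volume.real G ^ p := by gcongr; linarith
    _ ≤ C * (L - -L) ^ p * ∫ x in G, Ffun Λ S x ^ p :=
      hC (-L) L (by linarith) G inter_subset_left
    _ ≤ C * (L - -L) ^ p * (M / (δ / 8) ^ p) :=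
      mul_le_mul_of_nonneg_left hGv (mul_nonneg hC0.le (Real.rpow_nonneg (by linarith) _))
    _ = C * 4 ^ p * (M / (δ / 8) ^ p) * (L / 2) ^ p := by
      rw [show L - -L = 4 * (L / 2) by ring, Real.mul_rpow (by norm_num) (by linarith)]
      ring

theorem stmt_12_general (p : ℝ) (hp : 1 < p) (Λ : ℤ → ℂ)
    (hsep : Separated Λ)
    (S : ℂ → ℂ) (hS : HasGenFun Λ S) (hSent : Differentiable ℂ S)
    (hAp : MuckAp p (fun x => Ffun Λ S x ^ p)) :
    ¬ MeasureTheory.Integrable (fun x : ℝ => ‖S x‖ ^ p)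
        MeasureTheory.volume := by
  intro hint
  have hF := ae_pos_Ffun hsep hSent (by rw [hS.apply_zero]; exact one_ne_zero)
  obtain ⟨K, L₀, hK⟩ := exists_forall_ge_setIntegral_Ioc_rpow_Ffun_le hp hsep hF hAp hint
  obtain ⟨L, hKL, hL⟩ := (((hAp.tendsto_setIntegral_Ioc_neg_atTop hp
    (hF.mono fun x hx => Real.rpow_pos_of_pos hx p)).eventually_gt_atTop K).and
    (eventually_ge_atTop L₀)).exists
  exact (hK L hL).not_gt hKL

/-- under (i), (ii), (iii'), `∫ |S(x)|^p dx = ∞`. -/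
theorem stmt_12 (p : ℝ) (hp : 1 < p) (Λ : ℤ → ℂ)
    (hinj : Function.Injective Λ) (h0 : ∀ k : ℤ, Λ k ≠ 0)
    (hcarU : CarlesonAbove 0 Λ) (hcarL : CarlesonBelow 0 Λ) (hsep : Separated Λ)
    (S : ℂ → ℂ) (hS : HasGenFun Λ S) (hSent : Differentiable ℂ S)
    (htype : ExpTypeEq Real.pi S)
    (hAp : MuckAp p (fun x => Ffun Λ S x ^ p)) :
    ¬ MeasureTheory.Integrable (fun x : ℝ => ‖S x‖ ^ p)
        MeasureTheory.volume :=
  stmt_12_general p hp Λ hsep S hS hSent hAp
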